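/- Let A = diag(λ₁, …, λₙ) be an n×n real diagonal matrix, let i ≥ 1, and let r₀ ∈ ℝⁿ have all coordinates nonzero. Assume the set of nonzero values among λ₁, …, λₙ contains at least i+1 distinct elements, and let λ₍₁₎ > λ₍₂₎ > ⋯ > λ₍ᵢ₊₁₎ denote the i+1 largest distinct nonzero values among the diagonal entries. Then for the i-th curvature κ_i(t) of the trajectory t ↦ e^{tA} r₀: (a) κ_i(t) → 0 as t → +∞ if and only if λ₍₁₎ + λ₍ᵢ₎ > λ₍ᵢ₊₁₎; (b) κ_i(t) converges to some positive constant as t → +∞ if and only if λ₍₁₎ + λ₍ᵢ₎ = λ₍ᵢ₊₁₎; (c) κ_i(t) → +∞ as t → +∞ if and only if λ₍₁₎ + λ₍ᵢ₎ < λ₍ᵢ₊₁₎. -/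

import Mathlib

open Filter MeasureTheory

/-- The trajectory `t ↦ e^{tA} r₀` of the linear system `ṙ = A r`. -/
noncomputable def traj {n : ℕ} (A : Matrix (Fin n) (Fin n) ℝ) (r₀ : Fin n → ℝ) (t : ℝ) :
    Fin n → ℝ :=
  (NormedSpace.exp (t • A)).mulVec r₀

/-- The Gram determinant `G_k(t) = det (⟨A^a e^{tA} r₀, A^b e^{tA} r₀⟩)_{1 ≤ a,b ≤ k}` of the
first `k` derivatives of the trajectory. -/
noncomputable def gram {n : ℕ} (A : Matrix (Fin n) (Fin n) ℝ) (r₀ : Fin n → ℝ) (k : ℕ)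
    (t : ℝ) : ℝ :=
  Matrix.det (Matrix.of fun a b : Fin k =>
    dotProduct ((A ^ ((a : ℕ) + 1)).mulVec (traj A r₀ t))
      ((A ^ ((b : ℕ) + 1)).mulVec (traj A r₀ t)))

/-- `V_k(t) = √(G_k(t))`, the `k`-dimensional volume of the parallelotope spanned by the first
`k` derivatives, with the convention `V₀(t) = 1`. -/
noncomputable def vol {n : ℕ} (A : Matrix (Fin n) (Fin n) ℝ) (r₀ : Fin n → ℝ) (k : ℕ)
    (t : ℝ) : ℝ :=
  if k = 0 then 1 else Real.sqrt (gram A r₀ k t)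

/-- The `i`-th curvature `κ_i(t) = V_{i-1}(t) V_{i+1}(t) / (V₁(t) V_i(t)²)` of the trajectory
(equal to `0` when the denominator vanishes, by the Lean convention `x / 0 = 0`). -/
noncomputable def curvature {n : ℕ} (A : Matrix (Fin n) (Fin n) ℝ) (r₀ : Fin n → ℝ)
    (i : ℕ) (t : ℝ) : ℝ :=
  (vol A r₀ (i - 1) t * vol A r₀ (i + 1) t) / (vol A r₀ 1 t * (vol A r₀ i t) ^ 2)

/-- The torsion `τ(t) = √(G₃(t)) / G₂(t)` of the trajectory (equal to `0` when `G₂(t) = 0`,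
by the Lean convention `x / 0 = 0`). -/
noncomputable def torsion {n : ℕ} (A : Matrix (Fin n) (Fin n) ℝ) (r₀ : Fin n → ℝ)
    (t : ℝ) : ℝ :=
  Real.sqrt (gram A r₀ 3 t) / gram A r₀ 2 t

/-- The Euclidean norm on `ℝⁿ`. -/
noncomputable def euclNorm {n : ℕ} (x : Fin n → ℝ) : ℝ :=
  Real.sqrt (∑ j, x j ^ 2)

/-- Stability of the zero solution of `ṙ = A r`. -/
def IsStable {n : ℕ} (A : Matrix (Fin n) (Fin n) ℝ) : Prop :=
  ∀ ε > (0 : ℝ), ∃ δ > (0 : ℝ), ∀ r₀ : Fin n → ℝ, euclNorm r₀ < δ →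
    ∀ t ≥ (0 : ℝ), euclNorm (traj A r₀ t) < ε

/-- Asymptotic stability of the zero solution of `ṙ = A r`. -/
def IsAsympStable {n : ℕ} (A : Matrix (Fin n) (Fin n) ℝ) : Prop :=
  IsStable A ∧ ∃ δ > (0 : ℝ), ∀ r₀ : Fin n → ℝ, euclNorm r₀ < δ →
    Filter.Tendsto (fun t => traj A r₀ t) Filter.atTop (nhds 0)

-- AUX START
section CurvatureAux
open Matrix Filter

lemma traj_diagonal {n : ℕ} (d r₀ : Fin n → ℝ) (t : ℝ) (j : Fin n) :
    traj (Matrix.diagonal d) r₀ t j = Real.exp (t * d j) * r₀ j := by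
  rw [traj, ← Matrix.diagonal_smul, Matrix.exp_diagonal, Matrix.mulVec_diagonal]
  rw [Pi.coe_exp, ← Real.exp_eq_exp_ℝ]
  simp [smul_eq_mul]

lemma det_sum_smul {n k : ℕ} (B : Matrix (Fin n) (Fin k) ℝ) :
    Matrix.det (Matrix.of fun a b : Fin k => ∑ j, B j a * B j b)
      = ∑ σ : Fin k → Fin n, (∏ a, B (σ a) a) * Matrix.det (B.submatrix σ id) := by
  have h : ((Matrix.of fun a b : Fin k => ∑ j, B j a * B j b) : Matrix (Fin k) (Fin k) ℝ)
      = fun a => ∑ j, B j a • (fun b => B j b) := by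
    ext a b
    simp [Finset.sum_apply]
  rw [show Matrix.det (Matrix.of fun a b : Fin k => ∑ j, B j a * B j b)
        = Matrix.detRowAlternating ((Matrix.of fun a b : Fin k => ∑ j, B j a * B j b) :
          Matrix (Fin k) (Fin k) ℝ) from rfl, h]
  rw [show (Matrix.detRowAlternating (R := ℝ) (n := Fin k)) (fun a => ∑ j, B j a • (fun b => B j b))
      = (Matrix.detRowAlternating (R := ℝ) (n := Fin k)).toMultilinearMap
          (fun a => ∑ j, B j a • (fun b => B j b)) from rfl]
  rw [MultilinearMap.map_sum]
  refine Finset.sum_congr rfl fun σ _ => ?_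
  rw [MultilinearMap.map_smul_univ]
  rw [smul_eq_mul]
  congr 1

lemma det_submatrix_perm_sum {n k : ℕ} (B : Matrix (Fin n) (Fin k) ℝ) (σ : Fin k → Fin n) :
    Matrix.det (B.submatrix σ id)
      = ∑ π : Equiv.Perm (Fin k), ((Equiv.Perm.sign π : ℤ) : ℝ) * ∏ a, B (σ (π a)) a := by
  rw [Matrix.det_apply]
  refine Finset.sum_congr rfl fun π _ => ?_
  rw [Units.smul_def, zsmul_eq_mul]
  rfl

lemma sum_det_sq {n k : ℕ} (B : Matrix (Fin n) (Fin k) ℝ) :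
    ∑ σ : Fin k → Fin n, (Matrix.det (B.submatrix σ id)) ^ 2
      = (k.factorial : ℝ) * ∑ σ : Fin k → Fin n, (∏ a, B (σ a) a) * Matrix.det (B.submatrix σ id) := by
  have key : ∀ π : Equiv.Perm (Fin k),
      ∑ σ : Fin k → Fin n, (((Equiv.Perm.sign π : ℤ) : ℝ) * ∏ a, B (σ (π a)) a)
          * Matrix.det (B.submatrix σ id)
        = ∑ σ : Fin k → Fin n, (∏ a, B (σ a) a) * Matrix.det (B.submatrix σ id) := by
    intro π
    have hbij : Function.Bijective (fun σ : Fin k → Fin n => σ ∘ ⇑π) := by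
      constructor
      · intro f g hfg
        funext a
        have := congrFun hfg (π⁻¹ a)
        simpa using this
      · intro f
        exact ⟨f ∘ ⇑π⁻¹, by funext a; simp⟩
    rw [Fintype.sum_bijective _ hbij _
      (fun τ : Fin k → Fin n => (((Equiv.Perm.sign π : ℤ) : ℝ) * ∏ a, B (τ a) a)
          * Matrix.det (B.submatrix (τ ∘ ⇑π⁻¹) id))
      (fun σ => by
        have hcomp : (σ ∘ ⇑π) ∘ ⇑π⁻¹ = σ := by funext a; simp
        beta_reduce
        rw [hcomp]
        rfl)]
    refine Finset.sum_congr rfl fun τ _ => ?_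
    have h1 : B.submatrix (τ ∘ ⇑π⁻¹) id = (B.submatrix τ id).submatrix ⇑π⁻¹ id := by
      rw [Matrix.submatrix_submatrix]
      rfl
    rw [h1, Matrix.det_permute, Equiv.Perm.sign_inv]
    have h2 : ((Equiv.Perm.sign π : ℤ) : ℝ) * ((Equiv.Perm.sign π : ℤ) : ℝ) = 1 := by
      rcases Int.units_eq_one_or (Equiv.Perm.sign π) with h | h <;> rw [h] <;> norm_num
    rw [show (((Equiv.Perm.sign π : ℤ) : ℝ) * ∏ a, B (τ a) a)
        * (((Equiv.Perm.sign π : ℤ) : ℝ) * (B.submatrix τ id).det)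
      = (((Equiv.Perm.sign π : ℤ) : ℝ) * ((Equiv.Perm.sign π : ℤ) : ℝ))
        * ((∏ a, B (τ a) a) * (B.submatrix τ id).det) from by ring, h2, one_mul]
  calc ∑ σ : Fin k → Fin n, (Matrix.det (B.submatrix σ id)) ^ 2
      = ∑ σ : Fin k → Fin n, (∑ π : Equiv.Perm (Fin k),
          ((Equiv.Perm.sign π : ℤ) : ℝ) * ∏ a, B (σ (π a)) a) * Matrix.det (B.submatrix σ id) := by
        refine Finset.sum_congr rfl fun σ _ => ?_
        rw [pow_two]
        rw [det_submatrix_perm_sum B σ]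
    _ = ∑ π : Equiv.Perm (Fin k), ∑ σ : Fin k → Fin n,
          (((Equiv.Perm.sign π : ℤ) : ℝ) * ∏ a, B (σ (π a)) a) * Matrix.det (B.submatrix σ id) := by
        rw [Finset.sum_comm (s := Finset.univ) (t := Finset.univ)]
        refine Finset.sum_congr rfl fun σ _ => ?_
        rw [Finset.sum_mul]
    _ = ∑ _π : Equiv.Perm (Fin k), ∑ σ : Fin k → Fin n,
          (∏ a, B (σ a) a) * Matrix.det (B.submatrix σ id) := by
        exact Finset.sum_congr rfl fun π _ => key π
    _ = (k.factorial : ℝ) * ∑ σ : Fin k → Fin n, (∏ a, B (σ a) a) * Matrix.det (B.submatrix σ id) := by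
        rw [Finset.sum_const, Finset.card_univ, Fintype.card_perm, nsmul_eq_mul]
        simp

/-- The matrix whose columns are the derivative vectors. -/
noncomputable def Bmat {n : ℕ} (d r₀ : Fin n → ℝ) (k : ℕ) (t : ℝ) :
    Matrix (Fin n) (Fin k) ℝ :=
  Matrix.of fun j a => d j ^ ((a : ℕ) + 1) * Real.exp (t * d j) * r₀ j

lemma gram_eq_det {n : ℕ} (d r₀ : Fin n → ℝ) (k : ℕ) (t : ℝ) :
    gram (Matrix.diagonal d) r₀ k t
      = Matrix.det (Matrix.of fun a b : Fin k => ∑ j, Bmat d r₀ k t j a * Bmat d r₀ k t j b) := by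
  rw [_root_.gram]
  congr 1
  ext a b
  rw [Matrix.of_apply, Matrix.of_apply, dotProduct]
  refine Finset.sum_congr rfl fun j _ => ?_
  rw [Matrix.diagonal_pow, Matrix.diagonal_pow, Matrix.mulVec_diagonal, Matrix.mulVec_diagonal,
    traj_diagonal]
  simp only [Bmat, Pi.pow_apply, Matrix.of_apply]
  ring

/-- The coefficient attached to a choice function `σ`. -/
noncomputable def Pcoef {n : ℕ} (d r₀ : Fin n → ℝ) (k : ℕ) (σ : Fin k → Fin n) : ℝ :=
  (∏ a, d (σ a) * r₀ (σ a)) * ∏ a : Fin k, ∏ b ∈ Finset.Ioi a, (d (σ b) - d (σ a))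

lemma det_Bmat_submatrix {n : ℕ} (d r₀ : Fin n → ℝ) (k : ℕ) (t : ℝ) (σ : Fin k → Fin n) :
    Matrix.det ((Bmat d r₀ k t).submatrix σ id)
      = Pcoef d r₀ k σ * Real.exp (t * ∑ a, d (σ a)) := by
  have h : (Bmat d r₀ k t).submatrix σ id
      = Matrix.of fun a b : Fin k =>
          (d (σ a) * Real.exp (t * d (σ a)) * r₀ (σ a)) *
            Matrix.vandermonde (fun a => d (σ a)) a b := by
    ext a b
    simp [Bmat, Matrix.vandermonde, pow_succ]
    ring
  rw [h, Matrix.det_mul_column, Matrix.det_vandermonde]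
  have h2 : (∏ a, d (σ a) * Real.exp (t * d (σ a)) * r₀ (σ a))
      = (∏ a, d (σ a) * r₀ (σ a)) * Real.exp (t * ∑ a, d (σ a)) := by
    rw [Finset.mul_sum, Real.exp_sum, ← Finset.prod_mul_distrib]
    exact Finset.prod_congr rfl fun a _ => by ring
  rw [h2, Pcoef]
  ring

lemma gram_formula {n : ℕ} (d r₀ : Fin n → ℝ) (k : ℕ) (t : ℝ) :
    (k.factorial : ℝ) * gram (Matrix.diagonal d) r₀ k t
      = ∑ σ : Fin k → Fin n, Pcoef d r₀ k σ ^ 2 * Real.exp (2 * (∑ a, d (σ a)) * t) := by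
  rw [gram_eq_det, det_sum_smul, ← sum_det_sq]
  refine Finset.sum_congr rfl fun σ _ => ?_
  rw [det_Bmat_submatrix, mul_pow]
  congr 1
  rw [pow_two, ← Real.exp_add]
  congr 1
  ring

lemma gram_nonneg {n : ℕ} (d r₀ : Fin n → ℝ) (k : ℕ) (t : ℝ) :
    0 ≤ gram (Matrix.diagonal d) r₀ k t := by
  have h := gram_formula d r₀ k t
  have hfac : (0 : ℝ) < (k.factorial : ℝ) := by positivity
  have hsum : (0 : ℝ) ≤ ∑ σ : Fin k → Fin n, Pcoef d r₀ k σ ^ 2 *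
      Real.exp (2 * (∑ a, d (σ a)) * t) :=
    Finset.sum_nonneg fun σ _ => by positivity
  nlinarith

/-- Auxiliary extension of `μ` to `ℕ`. -/
noncomputable def nuv (i : ℕ) (μ : Fin (i + 1) → ℝ) (m : ℕ) : ℝ :=
  if h : m < i + 1 then μ ⟨m, h⟩ else 0

/-- Sum of the `k` largest distinct nonzero eigenvalues. -/
noncomputable def Esum (i : ℕ) (μ : Fin (i + 1) → ℝ) (k : ℕ) : ℝ :=
  ∑ m ∈ Finset.range k, nuv i μ m

section Comb
variable {i : ℕ} {μ : Fin (i + 1) → ℝ}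

lemma exists_small (hanti : StrictAnti μ) (k : ℕ) (hk : k < i + 1) (W : Finset ℝ)
    (hcard : k + 1 ≤ W.card)
    (hW : ∀ x ∈ W, (∃ m, μ m = x) ∨ x < μ (Fin.last i)) :
    ∃ x ∈ W, x ≤ μ ⟨k, hk⟩ := by
  by_contra hcon
  push_neg at hcon
  have hsub : W ⊆ Finset.image μ (Finset.Iio ⟨k, hk⟩) := by
    intro x hx
    rcases hW x hx with ⟨m, hm⟩ | hlt
    · refine Finset.mem_image.2 ⟨m, ?_, hm⟩
      rw [Finset.mem_Iio]
      have : μ ⟨k, hk⟩ < μ m := hm ▸ hcon x hx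
      exact (hanti.lt_iff_gt).1 this
    · exfalso
      have h1 : μ (Fin.last i) ≤ μ ⟨k, hk⟩ := hanti.antitone (Fin.le_last _)
      have := hcon x hx
      linarith
  have hle : W.card ≤ k := by
    calc W.card ≤ (Finset.image μ (Finset.Iio ⟨k, hk⟩)).card := Finset.card_le_card hsub
      _ ≤ (Finset.Iio (⟨k, hk⟩ : Fin (i + 1))).card := Finset.card_image_le
      _ = k := Fin.card_Iio _
  omega

lemma sum_W_le (hanti : StrictAnti μ) :
    ∀ (k : ℕ) (_ : k ≤ i + 1) (W : Finset ℝ), W.card = k →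
      (∀ x ∈ W, (∃ m, μ m = x) ∨ x < μ (Fin.last i)) →
      ∑ x ∈ W, x ≤ Esum i μ k := by
  intro k
  induction k with
  | zero =>
    intro _ W hcard _
    rw [Finset.card_eq_zero.1 hcard]
    simp [Esum]
  | succ k ih =>
    intro hk W hcard hW
    obtain ⟨x, hxW, hxle⟩ := exists_small hanti k (by omega) W (by omega) hW
    have hcard' : (W.erase x).card = k := by
      rw [Finset.card_erase_of_mem hxW, hcard]
      omega
    have hW' : ∀ y ∈ W.erase x, (∃ m, μ m = y) ∨ y < μ (Fin.last i) :=
      fun y hy => hW y (Finset.mem_of_mem_erase hy)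
    have h1 := ih (by omega) (W.erase x) hcard' hW'
    rw [← Finset.sum_erase_add W _ hxW, Esum, Finset.sum_range_succ]
    have h2 : nuv i μ k = μ ⟨k, by omega⟩ := dif_pos (by omega)
    rw [h2]
    exact add_le_add h1 hxle
end Comb

lemma tendsto_exp_mul_zero {c : ℝ} (hc : c < 0) :
    Tendsto (fun t => Real.exp (c * t)) atTop (nhds 0) := by
  have h1 : Tendsto (fun t : ℝ => -c * t) atTop atTop :=
    Filter.Tendsto.const_mul_atTop (by linarith) tendsto_id
  have h2 : Tendsto (fun t : ℝ => c * t) atTop atBot := by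
    have := tendsto_neg_atTop_atBot.comp h1
    refine this.congr fun t => ?_
    simp [Function.comp]
  exact Real.tendsto_exp_atBot.comp h2

lemma tendsto_exp_mul_atTop {c : ℝ} (hc : 0 < c) :
    Tendsto (fun t => Real.exp (c * t)) atTop atTop :=
  Real.tendsto_exp_atTop.comp (Filter.Tendsto.const_mul_atTop hc tendsto_id)

section Main
variable {n i : ℕ} {d r₀ : Fin n → ℝ} {μ : Fin (i + 1) → ℝ}

lemma pcoef_bound (hanti : StrictAnti μ)
    (hlargest : ∀ j, d j ≠ 0 → (∃ k, μ k = d j) ∨ d j < μ (Fin.last i))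
    (k : ℕ) (hk : k ≤ i + 1) (σ : Fin k → Fin n) (hP : Pcoef d r₀ k σ ≠ 0) :
    (∑ a, d (σ a)) ≤ Esum i μ k := by
  have hp1 : (∏ a, d (σ a) * r₀ (σ a)) ≠ 0 := left_ne_zero_of_mul hP
  have hp2 : (∏ a : Fin k, ∏ b ∈ Finset.Ioi a, (d (σ b) - d (σ a))) ≠ 0 :=
    right_ne_zero_of_mul hP
  have hd0 : ∀ a, d (σ a) ≠ 0 := by
    intro a
    have := Finset.prod_ne_zero_iff.1 hp1 a (Finset.mem_univ a)
    exact left_ne_zero_of_mul this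
  have hinj : Function.Injective (fun a : Fin k => d (σ a)) := by
    intro a b hab
    by_contra hne'
    rcases lt_trichotomy a b with h | h | h
    · have := (Finset.prod_ne_zero_iff.1 (Finset.prod_ne_zero_iff.1 hp2 a (Finset.mem_univ a)))
        b (Finset.mem_Ioi.2 h)
      simp only at hab
      rw [hab] at this
      simp at this
    · exact hne' h
    · have := (Finset.prod_ne_zero_iff.1 (Finset.prod_ne_zero_iff.1 hp2 b (Finset.mem_univ b)))
        a (Finset.mem_Ioi.2 h)
      simp only at hab
      rw [hab] at this
      simp at this
  set W : Finset ℝ := Finset.image (fun a : Fin k => d (σ a)) Finset.univ with hW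
  have hcard : W.card = k := by
    rw [hW, Finset.card_image_of_injective _ hinj, Finset.card_univ, Fintype.card_fin]
  have hsum : ∑ x ∈ W, x = ∑ a, d (σ a) := by
    rw [hW]
    exact Finset.sum_image fun x _ y _ h => hinj h
  have hprop : ∀ x ∈ W, (∃ m, μ m = x) ∨ x < μ (Fin.last i) := by
    intro x hx
    obtain ⟨a, _, rfl⟩ := Finset.mem_image.1 hx
    exact hlargest (σ a) (hd0 a)
  rw [← hsum]
  exact sum_W_le hanti k hk W hcard hprop

lemma gram_tendsto (hr : ∀ j, r₀ j ≠ 0) (hanti : StrictAnti μ)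
    (hne : ∀ k, μ k ≠ 0) (hmem : ∀ k, ∃ j, d j = μ k)
    (hlargest : ∀ j, d j ≠ 0 → (∃ k, μ k = d j) ∨ d j < μ (Fin.last i))
    (k : ℕ) (hk : k ≤ i + 1) :
    ∃ C > 0, Tendsto (fun t => gram (Matrix.diagonal d) r₀ k t *
      Real.exp (-2 * Esum i μ k * t)) atTop (nhds C) := by
  classical
  set E := Esum i μ k with hE
  -- witness σ*
  choose jfun hjfun using hmem
  have hjinj : Function.Injective jfun := by
    intro a b hab
    apply hanti.injective
    rw [← hjfun a, ← hjfun b, hab]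
  set σs : Fin k → Fin n := fun a => jfun (Fin.castLE hk a) with hσs
  have hdσs : ∀ a : Fin k, d (σs a) = μ (Fin.castLE hk a) := fun a => hjfun _
  have hPs : Pcoef d r₀ k σs ≠ 0 := by
    rw [Pcoef]
    apply mul_ne_zero
    · rw [Finset.prod_ne_zero_iff]
      intro a _
      apply mul_ne_zero
      · rw [hdσs]; exact hne _
      · exact hr _
    · rw [Finset.prod_ne_zero_iff]
      intro a _
      rw [Finset.prod_ne_zero_iff]
      intro b hb
      rw [hdσs, hdσs, sub_ne_zero]
      intro hcontra
      have := hanti.injective hcontra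
      have hab : a ≠ b := (Finset.mem_Ioi.1 hb).ne
      apply hab
      have : (a : ℕ) = (b : ℕ) := by
        have := congrArg Fin.val this
        simpa [Fin.castLE] using this.symm
      exact Fin.ext this
  have hss : (∑ a, d (σs a)) = E := by
    rw [hE, Esum]
    rw [show (∑ a, d (σs a)) = ∑ a : Fin k, nuv i μ (a : ℕ) from
      Finset.sum_congr rfl fun a _ => by
        rw [hdσs, nuv, dif_pos (by omega : (a : ℕ) < i + 1)]
        congr 1]
    exact Fin.sum_univ_eq_sum_range (fun m => nuv i μ m) k
  -- limits of individual terms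
  have hterm : ∀ σ : Fin k → Fin n,
      Tendsto (fun t => Pcoef d r₀ k σ ^ 2 * Real.exp (2 * (∑ a, d (σ a)) * t) *
          Real.exp (-2 * E * t)) atTop
        (nhds (if (∑ a, d (σ a)) = E then Pcoef d r₀ k σ ^ 2 else 0)) := by
    intro σ
    have hfun : ∀ t : ℝ, Pcoef d r₀ k σ ^ 2 * Real.exp (2 * (∑ a, d (σ a)) * t) *
        Real.exp (-2 * E * t)
        = Pcoef d r₀ k σ ^ 2 * Real.exp ((2 * (∑ a, d (σ a)) - 2 * E) * t) := by
      intro t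
      rw [mul_assoc, ← Real.exp_add]
      congr 2
      ring
    by_cases hP : Pcoef d r₀ k σ = 0
    · simp only [hP]
      norm_num
    · have hle := pcoef_bound hanti hlargest k hk σ hP
      rcases eq_or_lt_of_le hle with heq | hlt
      · rw [if_pos heq]
        refine tendsto_const_nhds.congr fun t => ?_
        rw [hfun t, heq]
        rw [show 2 * E - 2 * E = 0 from by ring, zero_mul, Real.exp_zero, mul_one]
      · rw [if_neg (ne_of_lt hlt)]
        have h0 : Tendsto (fun t => Pcoef d r₀ k σ ^ 2 *
            Real.exp ((2 * (∑ a, d (σ a)) - 2 * E) * t)) atTop (nhds 0) := by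
          have := (tendsto_exp_mul_zero (by linarith :
            2 * (∑ a, d (σ a)) - 2 * E < 0)).const_mul (Pcoef d r₀ k σ ^ 2)
          simpa using this
        exact h0.congr fun t => (hfun t).symm
  set C0 : ℝ := ∑ σ : Fin k → Fin n, (if (∑ a, d (σ a)) = E then Pcoef d r₀ k σ ^ 2 else 0)
    with hC0
  have hsumT : Tendsto (fun t => ∑ σ : Fin k → Fin n,
      Pcoef d r₀ k σ ^ 2 * Real.exp (2 * (∑ a, d (σ a)) * t) * Real.exp (-2 * E * t))
      atTop (nhds C0) := tendsto_finset_sum _ fun σ _ => hterm σ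
  have hfac : (0 : ℝ) < (k.factorial : ℝ) := by positivity
  have hgram : ∀ t, gram (Matrix.diagonal d) r₀ k t * Real.exp (-2 * E * t)
      = (∑ σ : Fin k → Fin n, Pcoef d r₀ k σ ^ 2 * Real.exp (2 * (∑ a, d (σ a)) * t) *
          Real.exp (-2 * E * t)) / (k.factorial : ℝ) := by
    intro t
    rw [← Finset.sum_mul, ← gram_formula]
    field_simp
  refine ⟨C0 / (k.factorial : ℝ), ?_, ?_⟩
  · apply div_pos _ hfac
    rw [hC0]
    have hmem' : σs ∈ (Finset.univ : Finset (Fin k → Fin n)) := Finset.mem_univ _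
    have hterm_pos : (0 : ℝ) < (if (∑ a, d (σs a)) = E then Pcoef d r₀ k σs ^ 2 else 0) := by
      rw [if_pos hss]
      positivity
    calc (0 : ℝ) < (if (∑ a, d (σs a)) = E then Pcoef d r₀ k σs ^ 2 else 0) := hterm_pos
      _ ≤ ∑ σ : Fin k → Fin n, (if (∑ a, d (σ a)) = E then Pcoef d r₀ k σ ^ 2 else 0) :=
        Finset.single_le_sum
          (f := fun σ : Fin k → Fin n => if (∑ a, d (σ a)) = E then Pcoef d r₀ k σ ^ 2 else 0)
          (fun σ _ => by beta_reduce; split <;> positivity) hmem'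
  · have := hsumT.div_const (k.factorial : ℝ)
    exact this.congr fun t => (hgram t).symm

lemma vol_tendsto (hr : ∀ j, r₀ j ≠ 0) (hanti : StrictAnti μ)
    (hne : ∀ k, μ k ≠ 0) (hmem : ∀ k, ∃ j, d j = μ k)
    (hlargest : ∀ j, d j ≠ 0 → (∃ k, μ k = d j) ∨ d j < μ (Fin.last i))
    (k : ℕ) (hk : k ≤ i + 1) :
    ∃ C > 0, Tendsto (fun t => vol (Matrix.diagonal d) r₀ k t *
      Real.exp (-Esum i μ k * t)) atTop (nhds C) := by
  rcases Nat.eq_zero_or_pos k with hk0 | hk1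
  · subst hk0
    refine ⟨1, one_pos, ?_⟩
    have : ∀ t : ℝ, vol (Matrix.diagonal d) r₀ 0 t * Real.exp (-Esum i μ 0 * t) = 1 := by
      intro t
      rw [vol, if_pos rfl, Esum]
      simp
    exact tendsto_const_nhds.congr fun t => (this t).symm
  · obtain ⟨C, hC, hT⟩ := gram_tendsto hr hanti hne hmem hlargest k hk
    refine ⟨Real.sqrt C, Real.sqrt_pos.2 hC, ?_⟩
    have hfun : ∀ t, vol (Matrix.diagonal d) r₀ k t * Real.exp (-Esum i μ k * t)
        = Real.sqrt (gram (Matrix.diagonal d) r₀ k t * Real.exp (-2 * Esum i μ k * t)) := by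
      intro t
      rw [vol, if_neg (by omega)]
      rw [Real.sqrt_mul (gram_nonneg d r₀ k t)]
      congr 1
      rw [show (-2 * Esum i μ k * t) = (-Esum i μ k * t) + (-Esum i μ k * t) from by ring,
        Real.exp_add, ← pow_two, Real.sqrt_sq (Real.exp_nonneg _)]
    have := (Real.continuous_sqrt.tendsto C).comp hT
    exact this.congr fun t => (hfun t).symm

end Main
end CurvatureAux
-- AUX END

/-- Let `A = diag(λ₁, …, λₙ)` be a real diagonal matrix, `i ≥ 1`, and let `r₀`
have all coordinates nonzero.  Let `μ 0 > μ 1 > ⋯ > μ i` be the `i + 1` largest distinct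
nonzero values among `λ₁, …, λₙ` (so `μ (k-1) = λ₍ₖ₎`).  Then as `t → +∞`:
(a) `κ_i(t) → 0` iff `λ₍₁₎ + λ₍ᵢ₎ > λ₍ᵢ₊₁₎`;
(b) `κ_i(t)` converges to a positive constant iff `λ₍₁₎ + λ₍ᵢ₎ = λ₍ᵢ₊₁₎`;
(c) `κ_i(t) → +∞` iff `λ₍₁₎ + λ₍ᵢ₎ < λ₍ᵢ₊₁₎`. -/
theorem curvature_limit_diagonal {n : ℕ} (d : Fin n → ℝ) (i : ℕ) (hi : 1 ≤ i)
    (r₀ : Fin n → ℝ) (hr : ∀ j, r₀ j ≠ 0)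
    (μ : Fin (i + 1) → ℝ) (hanti : StrictAnti μ)
    (hne : ∀ k, μ k ≠ 0)
    (hmem : ∀ k, ∃ j, d j = μ k)
    (hlargest : ∀ j, d j ≠ 0 → (∃ k, μ k = d j) ∨ d j < μ (Fin.last i)) :
    (Tendsto (fun t => curvature (Matrix.diagonal d) r₀ i t) atTop (nhds 0) ↔
        μ (Fin.last i) < μ 0 + μ ⟨i - 1, by omega⟩) ∧
    ((∃ C : ℝ, 0 < C ∧
        Tendsto (fun t => curvature (Matrix.diagonal d) r₀ i t) atTop (nhds C)) ↔
        μ 0 + μ ⟨i - 1, by omega⟩ = μ (Fin.last i)) ∧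
    (Tendsto (fun t => curvature (Matrix.diagonal d) r₀ i t) atTop atTop ↔
        μ 0 + μ ⟨i - 1, by omega⟩ < μ (Fin.last i)) := by
  
  classical
  set A := Matrix.diagonal d with hA
  obtain ⟨C1, hC1, h1⟩ := vol_tendsto hr hanti hne hmem hlargest (i - 1) (by omega)
  obtain ⟨C2, hC2, h2⟩ := vol_tendsto hr hanti hne hmem hlargest 1 (by omega)
  obtain ⟨C3, hC3, h3⟩ := vol_tendsto hr hanti hne hmem hlargest i (by omega)
  obtain ⟨C4, hC4, h4⟩ := vol_tendsto hr hanti hne hmem hlargest (i + 1) (le_refl _)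
  set E := Esum i μ with hEdef
  set δ : ℝ := E (i - 1) + E (i + 1) - E 1 - 2 * E i with hδdef
  have hδ : δ = μ (Fin.last i) - (μ 0 + μ ⟨i - 1, by omega⟩) := by
    have e1 : E 1 = μ 0 := by
      rw [hEdef, Esum, Finset.sum_range_one, nuv,
        dif_pos (by omega : 0 < i + 1)]
      exact congrArg μ (Fin.ext (by simp))
    have e2 : E (i + 1) = E i + nuv i μ i := by
      rw [hEdef, Esum, Esum, Finset.sum_range_succ]
    have e3 : E i = E (i - 1) + nuv i μ (i - 1) := by
      have h := Finset.sum_range_succ (fun m => nuv i μ m) (i - 1)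
      rw [show i - 1 + 1 = i from by omega] at h
      exact h
    have e4 : nuv i μ i = μ (Fin.last i) := by
      rw [nuv, dif_pos (by omega : i < i + 1)]
      rfl
    have e5 : nuv i μ (i - 1) = μ ⟨i - 1, by omega⟩ := by
      rw [nuv, dif_pos (by omega : i - 1 < i + 1)]
    rw [hδdef, e1, e2, e3, e4, e5]
    ring
  set L : ℝ := (C1 * C4) / (C2 * C3 ^ 2) with hL
  have hLpos : 0 < L := by positivity
  have hQT : Filter.Tendsto (fun t =>
      (vol A r₀ (i - 1) t * Real.exp (-E (i - 1) * t) *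
        (vol A r₀ (i + 1) t * Real.exp (-E (i + 1) * t))) /
      ((vol A r₀ 1 t * Real.exp (-E 1 * t)) *
        (vol A r₀ i t * Real.exp (-E i * t)) ^ 2)) atTop (nhds L) := by
    rw [hL]
    exact Filter.Tendsto.div (h1.mul h4) (h2.mul (h3.pow 2)) (by positivity)
  have hkey : ∀ t, curvature A r₀ i t =
      ((vol A r₀ (i - 1) t * Real.exp (-E (i - 1) * t) *
        (vol A r₀ (i + 1) t * Real.exp (-E (i + 1) * t))) /
      ((vol A r₀ 1 t * Real.exp (-E 1 * t)) *
        (vol A r₀ i t * Real.exp (-E i * t)) ^ 2)) * Real.exp (δ * t) := by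
    intro t
    rw [curvature]
    have hexp : ∀ x y z w u : ℝ,
        Real.exp x * Real.exp y / (Real.exp z * Real.exp w ^ 2) * Real.exp u
          = Real.exp (x + y - (z + 2 * w) + u) := by
      intro x y z w u
      rw [pow_two, ← Real.exp_add, ← Real.exp_add, ← Real.exp_add, div_eq_mul_inv,
        ← Real.exp_neg, ← Real.exp_add, ← Real.exp_add]
      congr 1
      ring
    have hrearr : (vol A r₀ (i - 1) t * Real.exp (-E (i - 1) * t) *
        (vol A r₀ (i + 1) t * Real.exp (-E (i + 1) * t))) /
      ((vol A r₀ 1 t * Real.exp (-E 1 * t)) *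
        (vol A r₀ i t * Real.exp (-E i * t)) ^ 2) * Real.exp (δ * t)
        = (vol A r₀ (i - 1) t * vol A r₀ (i + 1) t) /
            (vol A r₀ 1 t * vol A r₀ i t ^ 2) *
          (Real.exp (-E (i - 1) * t) * Real.exp (-E (i + 1) * t) /
            (Real.exp (-E 1 * t) * Real.exp (-E i * t) ^ 2) * Real.exp (δ * t)) := by
      ring
    rw [hrearr, hexp]
    rw [show -E (i - 1) * t + -E (i + 1) * t - (-E 1 * t + 2 * (-E i * t)) + δ * t = 0 from by
      rw [hδdef]; ring]
    rw [Real.exp_zero, mul_one]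
  have case_neg : δ < 0 → Filter.Tendsto (fun t => curvature A r₀ i t) atTop (nhds 0) := by
    intro h
    have := hQT.mul (tendsto_exp_mul_zero h)
    rw [mul_zero] at this
    exact this.congr fun t => (hkey t).symm
  have case_zero : δ = 0 → Filter.Tendsto (fun t => curvature A r₀ i t) atTop (nhds L) := by
    intro h
    refine hQT.congr fun t => ?_
    rw [hkey t, h, zero_mul, Real.exp_zero, mul_one]
  have case_pos : 0 < δ → Filter.Tendsto (fun t => curvature A r₀ i t) atTop atTop := by
    intro h
    exact (Filter.Tendsto.pos_mul_atTop hLpos hQT (tendsto_exp_mul_atTop h)).congr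
      fun t => (hkey t).symm
  have htrans1 : δ < 0 ↔ μ (Fin.last i) < μ 0 + μ ⟨i - 1, by omega⟩ := by
    rw [hδ]; constructor <;> intro <;> linarith
  have htrans2 : δ = 0 ↔ μ 0 + μ ⟨i - 1, by omega⟩ = μ (Fin.last i) := by
    rw [hδ]; constructor <;> intro <;> linarith
  have htrans3 : 0 < δ ↔ μ 0 + μ ⟨i - 1, by omega⟩ < μ (Fin.last i) := by
    rw [hδ]; constructor <;> intro <;> linarith
  refine ⟨⟨fun hT => ?_, fun h => case_neg (htrans1.2 h)⟩,
    ⟨fun h => ?_, fun h => ⟨L, hLpos, case_zero (htrans2.2 h)⟩⟩,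
    ⟨fun hT => ?_, fun h => case_pos (htrans3.2 h)⟩⟩
  · rcases lt_trichotomy δ 0 with h | h | h
    · exact htrans1.1 h
    · exfalso
      have := tendsto_nhds_unique hT (case_zero h)
      exact absurd this.symm (ne_of_gt hLpos)
    · exact absurd (case_pos h) (not_tendsto_atTop_of_tendsto_nhds hT)
  · obtain ⟨C, hCpos, hT⟩ := h
    rcases lt_trichotomy δ 0 with h | h | h
    · exfalso
      have := tendsto_nhds_unique hT (case_neg h)
      exact absurd this (ne_of_gt hCpos)
    · exact htrans2.1 h
    · exact absurd (case_pos h) (not_tendsto_atTop_of_tendsto_nhds hT)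
  · rcases lt_trichotomy δ 0 with h | h | h
    · exact absurd hT (not_tendsto_atTop_of_tendsto_nhds (case_neg h))
    · exact absurd hT (not_tendsto_atTop_of_tendsto_nhds (case_zero h))
    · exact htrans3.1 h
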